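/- Let n ≥ 1 be an integer. For every real x: ∫_{-∞}^∞ J_n(x e^{-t²}) dt = √π ∑_{k=0}^∞ [(-1)^k/(k!(k+n)!)] (x/2)^{2k+n}/√(2k+n), where the series converges absolutely and the integrand is Lebesgue integrable on ℝ. -/
import Mathlib


open MeasureTheory

set_option maxHeartbeats 1000000

/-- The Bessel function of the first kind of integer order `n`:
`J_n(x) = ∑_k (-1)^k (x/2)^(2k+n) / (k! (k+n)!)`. -/
noncomputable def besselJNat (n : ℕ) (x : ℝ) : ℝ :=
  ∑' k : ℕ, (-1) ^ k * (x / 2) ^ (2 * k + n) /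
    ((k.factorial : ℝ) * ((k + n).factorial : ℝ))

namespace BesselAux

noncomputable def c (n k : ℕ) : ℝ :=
  (-1) ^ k / ((k.factorial : ℝ) * ((k + n).factorial : ℝ))

noncomputable def F (n : ℕ) (x : ℝ) (k : ℕ) (t : ℝ) : ℝ :=
  c n k * (x / 2) ^ (2 * k + n) * Real.exp (-((2 * k + n : ℕ) : ℝ) * t ^ 2)

lemma abs_c_le (n k : ℕ) : |c n k| ≤ 1 / k.factorial := by
  rw [c, abs_div, abs_pow, abs_neg, abs_one, one_pow]
  have h1 : (1 : ℝ) ≤ ((k + n).factorial : ℝ) := by exact_mod_cast (k + n).factorial_pos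
  have h0 : (0 : ℝ) < k.factorial := by exact_mod_cast k.factorial_pos
  rw [abs_of_pos (by positivity)]
  apply div_le_div_of_nonneg_left one_pos.le h0
  nlinarith

/-- majorant -/
noncomputable def u (n : ℕ) (x : ℝ) (k : ℕ) : ℝ :=
  (|x| / 2) ^ n * ((|x| / 2) ^ 2) ^ k / k.factorial

lemma u_nonneg (n : ℕ) (x : ℝ) (k : ℕ) : 0 ≤ u n x k := by
  unfold u; positivity

lemma summable_u (n : ℕ) (x : ℝ) : Summable (u n x) := by
  unfold u
  simpa [div_eq_mul_inv, mul_assoc] using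
    (Real.summable_pow_div_factorial ((|x| / 2) ^ 2)).mul_left ((|x| / 2) ^ n)

lemma abs_term_le (n k : ℕ) (x : ℝ) : |c n k * (x / 2) ^ (2 * k + n)| ≤ u n x k := by
  rw [abs_mul, abs_pow, abs_div, abs_two]
  have hsplit : (|x| / 2) ^ (2 * k + n) = (|x| / 2) ^ n * ((|x| / 2) ^ 2) ^ k := by
    rw [← pow_mul, ← pow_add, add_comm]
  rw [hsplit, u, div_eq_mul_inv ((|x| / 2) ^ n * _)]
  have h1 : (0 : ℝ) ≤ (|x| / 2) ^ n * ((|x| / 2) ^ 2) ^ k := by positivity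
  calc |c n k| * ((|x| / 2) ^ n * ((|x| / 2) ^ 2) ^ k)
      ≤ (1 / k.factorial) * ((|x| / 2) ^ n * ((|x| / 2) ^ 2) ^ k) :=
        mul_le_mul_of_nonneg_right (abs_c_le n k) h1
    _ = (|x| / 2) ^ n * ((|x| / 2) ^ 2) ^ k * (k.factorial : ℝ)⁻¹ := by ring

lemma one_le_m (n k : ℕ) (hn : 1 ≤ n) : (1 : ℝ) ≤ ((2 * k + n : ℕ) : ℝ) := by
  exact_mod_cast hn.trans (Nat.le_add_left n (2 * k))

lemma besselJ_eq_tsum (n : ℕ) (x t : ℝ) :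
    besselJNat n (x * Real.exp (-t ^ 2)) = ∑' k, F n x k t := by
  unfold besselJNat F c
  congr 1; funext k
  have h1 : x * Real.exp (-t ^ 2) / 2 = x / 2 * Real.exp (-t ^ 2) := by ring
  rw [h1, mul_pow, ← Real.exp_nat_mul]
  ring_nf

lemma integrable_F (n : ℕ) (hn : 1 ≤ n) (x : ℝ) (k : ℕ) : Integrable (F n x k) := by
  have hm : (0 : ℝ) < ((2 * k + n : ℕ) : ℝ) := lt_of_lt_of_le one_pos (one_le_m n k hn)
  exact (integrable_exp_neg_mul_sq hm).const_mul _

lemma integral_F (n : ℕ) (x : ℝ) (k : ℕ) :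
    ∫ t : ℝ, F n x k t = c n k * (x / 2) ^ (2 * k + n) *
      Real.sqrt (Real.pi / ((2 * k + n : ℕ) : ℝ)) := by
  unfold F
  simp only [MeasureTheory.integral_const_mul]
  rw [integral_gaussian]

end BesselAux

open BesselAux in
/-- For integer `n ≥ 1` and every real `x`, the function `t ↦ J_n(x e^{-t²})`
is Lebesgue integrable on `ℝ`, the series
`∑_k [(-1)^k/(k!(k+n)!)] (x/2)^(2k+n)/√(2k+n)` converges absolutely, and
`∫_{-∞}^∞ J_n(x e^{-t²}) dt = √π ∑_k [(-1)^k/(k!(k+n)!)] (x/2)^(2k+n)/√(2k+n)`. -/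
theorem integral_besselJ_gauss (n : ℕ) (hn : 1 ≤ n) (x : ℝ) :
    Integrable (fun t : ℝ => besselJNat n (x * Real.exp (-t ^ 2))) ∧
      Summable (fun k : ℕ =>
        |(-1) ^ k / ((k.factorial : ℝ) * ((k + n).factorial : ℝ)) *
          ((x / 2) ^ (2 * k + n) / Real.sqrt (2 * k + n))|) ∧
      ∫ t : ℝ, besselJNat n (x * Real.exp (-t ^ 2))
        = Real.sqrt Real.pi * ∑' k : ℕ,
            (-1) ^ k / ((k.factorial : ℝ) * ((k + n).factorial : ℝ)) *
              ((x / 2) ^ (2 * k + n) / Real.sqrt (2 * k + n)) := by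
  have hcast : ∀ k : ℕ, (2 * (k : ℝ) + n) = ((2 * k + n : ℕ) : ℝ) := by
    intro k; push_cast; ring
  -- uniform bound on each term of F
  have hFbound : ∀ k t, |F n x k t| ≤ u n x k := by
    intro k t
    rw [F, abs_mul]
    have he : |Real.exp (-((2 * k + n : ℕ) : ℝ) * t ^ 2)| ≤ 1 := by
      rw [abs_of_pos (Real.exp_pos _)]
      apply Real.exp_le_one_iff.2
      have h0 : (0 : ℝ) ≤ ((2 * k + n : ℕ) : ℝ) := Nat.cast_nonneg _
      nlinarith [sq_nonneg t]
    calc |c n k * (x / 2) ^ (2 * k + n)| * |Real.exp (-((2 * k + n : ℕ) : ℝ) * t ^ 2)|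
        ≤ |c n k * (x / 2) ^ (2 * k + n)| * 1 :=
          mul_le_mul_of_nonneg_left he (abs_nonneg _)
      _ = |c n k * (x / 2) ^ (2 * k + n)| := mul_one _
      _ ≤ u n x k := abs_term_le n k x
  -- continuity of the sum
  have hcont : Continuous (fun t : ℝ => ∑' k, F n x k t) := by
    apply continuous_tsum (fun k => by unfold F; fun_prop) (summable_u n x)
    intro k t
    simpa [Real.norm_eq_abs] using hFbound k t
  have hfun : (fun t : ℝ => besselJNat n (x * Real.exp (-t ^ 2)))
      = fun t : ℝ => ∑' k, F n x k t := funext fun t => besselJ_eq_tsum n x t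
  -- integrability
  have hM : (0 : ℝ) < (n : ℝ) := by exact_mod_cast hn
  have hint : Integrable (fun t : ℝ => besselJNat n (x * Real.exp (-t ^ 2))) := by
    rw [hfun]
    apply Integrable.mono' (((integrable_exp_neg_mul_sq hM).const_mul (∑' k, u n x k)))
      hcont.aestronglyMeasurable
    filter_upwards with t
    rw [Real.norm_eq_abs]
    have hsum_abs : Summable fun k => |F n x k t| :=
      (summable_u n x).of_nonneg_of_le (fun k => abs_nonneg _) (fun k => hFbound k t)
    calc |∑' k, F n x k t| ≤ ∑' k, |F n x k t| := by
          simpa [Real.norm_eq_abs] using norm_tsum_le_tsum_norm (f := fun k => F n x k t) (by simpa [Real.norm_eq_abs] using hsum_abs)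
      _ ≤ ∑' k, u n x k * Real.exp (-(n : ℝ) * t ^ 2) := by
          apply Summable.tsum_le_tsum _ hsum_abs ((summable_u n x).mul_right _)
          intro k
          have hee : Real.exp (-((2 * k + n : ℕ) : ℝ) * t ^ 2)
              ≤ Real.exp (-(n : ℝ) * t ^ 2) := by
            apply Real.exp_le_exp.2
            have : (n : ℝ) ≤ ((2 * k + n : ℕ) : ℝ) := by
              exact_mod_cast Nat.le_add_left n (2 * k)
            nlinarith [sq_nonneg t]
          calc |F n x k t| = |c n k * (x / 2) ^ (2 * k + n)| *
                Real.exp (-((2 * k + n : ℕ) : ℝ) * t ^ 2) := by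
                rw [F, abs_mul, abs_of_pos (Real.exp_pos _)]
            _ ≤ u n x k * Real.exp (-(n : ℝ) * t ^ 2) :=
                mul_le_mul (abs_term_le n k x) hee (Real.exp_pos _).le (u_nonneg n x k)
      _ = (∑' k, u n x k) * Real.exp (-(n : ℝ) * t ^ 2) := tsum_mul_right
  refine ⟨hint, ?_, ?_⟩
  · -- summability of the series in the statement
    apply (summable_u n x).of_nonneg_of_le (fun k => abs_nonneg _)
    intro k
    rw [abs_mul]
    have h1 : (1 : ℝ) ≤ Real.sqrt (2 * (k : ℝ) + n) := by
      rw [show (1:ℝ) = Real.sqrt 1 by simp]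
      exact Real.sqrt_le_sqrt (by rw [hcast]; exact one_le_m n k hn)
    have h2 : |(x / 2) ^ (2 * k + n) / Real.sqrt (2 * (k : ℝ) + n)|
        ≤ |(x / 2) ^ (2 * k + n)| := by
      rw [abs_div, abs_of_nonneg (Real.sqrt_nonneg _)]
      exact div_le_self (abs_nonneg _) h1
    calc |(-1) ^ k / ((k.factorial : ℝ) * ((k + n).factorial : ℝ))| *
          |(x / 2) ^ (2 * k + n) / Real.sqrt (2 * (k : ℝ) + n)|
        ≤ |c n k| * |(x / 2) ^ (2 * k + n)| :=
          mul_le_mul_of_nonneg_left h2 (abs_nonneg _)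
      _ = |c n k * (x / 2) ^ (2 * k + n)| := (abs_mul _ _).symm
      _ ≤ u n x k := abs_term_le n k x
  · -- the integral formula
    rw [hfun]
    have hnorm_sum : Summable fun k => ∫ t : ℝ, ‖F n x k t‖ := by
      apply ((summable_u n x).mul_right (Real.sqrt Real.pi)).of_nonneg_of_le
        (fun k => integral_nonneg fun t => norm_nonneg _)
      intro k
      have hnorm : ∀ t : ℝ, ‖F n x k t‖ = |c n k * (x / 2) ^ (2 * k + n)| *
          Real.exp (-((2 * k + n : ℕ) : ℝ) * t ^ 2) := by
        intro t
        rw [Real.norm_eq_abs, F, abs_mul, abs_of_pos (Real.exp_pos _)]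
      simp_rw [hnorm]
      rw [MeasureTheory.integral_const_mul, integral_gaussian]
      have hsq : Real.sqrt (Real.pi / ((2 * k + n : ℕ) : ℝ)) ≤ Real.sqrt Real.pi := by
        apply Real.sqrt_le_sqrt
        rw [div_le_iff₀ (lt_of_lt_of_le one_pos (one_le_m n k hn))]
        nlinarith [Real.pi_pos, one_le_m n k hn]
      calc |c n k * (x / 2) ^ (2 * k + n)| * Real.sqrt (Real.pi / ((2 * k + n : ℕ) : ℝ))
          ≤ |c n k * (x / 2) ^ (2 * k + n)| * Real.sqrt Real.pi :=
            mul_le_mul_of_nonneg_left hsq (abs_nonneg _)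
        _ ≤ u n x k * Real.sqrt Real.pi :=
            mul_le_mul_of_nonneg_right (abs_term_le n k x) (Real.sqrt_nonneg _)
    rw [← MeasureTheory.integral_tsum_of_summable_integral_norm
      (fun k => integrable_F n hn x k) hnorm_sum]
    rw [← tsum_mul_left]
    congr 1; funext k
    rw [integral_F]
    have hmpos : (0 : ℝ) < ((2 * k + n : ℕ) : ℝ) := lt_of_lt_of_le one_pos (one_le_m n k hn)
    rw [Real.sqrt_div Real.pi_nonneg, ← hcast k, c]
    ring
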